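/- arXiv:2212.08162 — 4 statements merged into one kernel-verified Lean document; each statement's English description precedes it below -/
import Mathlib

section
/- For every 0 < r < 1 and all a, t ≥ 0, one has (a+t)^r − a^r = (1/(−Γ(−r))) · ∫₀^∞ (1 − e^{−t s}) e^{−a s} / s^{1+r} ds. -/
/-!
For `0 < r < 1` every power is a mixture of the functions `x ↦ 1 - exp (-x s)`:
`x ^ r = (-Γ(-r))⁻¹ ∫₀^∞ (1 - exp (-x s)) s ^ (-1-r) ds`.
The substitution `s ↦ x s` reduces this to `x = 1`, where one integration by parts turns the
integral into `Γ(1 - r) / r = -Γ(-r)`. Subtracting the formulas at `a + t` and `a` gives the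
theorem, since `(1 - exp (-(a + t) s)) - (1 - exp (-a s)) = (1 - exp (-t s)) exp (-a s)`.
-/

open MeasureTheory Real Set Filter Topology

lemma one_sub_exp_neg_nonneg {u : ℝ} (hu : 0 ≤ u) : 0 ≤ 1 - exp (-u) := by
  simpa using exp_le_one_iff.mpr (neg_nonpos.mpr hu)

lemma one_sub_exp_neg_le (u : ℝ) : 1 - exp (-u) ≤ u := by
  linarith [one_sub_le_exp_neg u]

theorem integrableOn_one_sub_exp_neg_mul_rpow {r x : ℝ} (hr0 : 0 < r) (hr1 : r < 1)
    (hx : 0 ≤ x) : IntegrableOn (fun s ↦ (1 - exp (-(x * s))) * s ^ (-(1 + r))) (Ioi 0) := by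
  have hmeas : AEStronglyMeasurable (fun s : ℝ ↦ (1 - exp (-(x * s))) * s ^ (-(1 + r)))
      (volume.restrict (Ioi 0)) := by fun_prop
  have hnorm : ∀ s ∈ Ioi (0 : ℝ),
      ‖(1 - exp (-(x * s))) * s ^ (-(1 + r))‖ = (1 - exp (-(x * s))) * s ^ (-(1 + r)) :=
    fun s hs ↦ Real.norm_of_nonneg <|
      mul_nonneg (one_sub_exp_neg_nonneg (mul_nonneg hx hs.le)) (rpow_nonneg hs.le _)
  rw [← Ioc_union_Ioi_eq_Ioi zero_le_one]
  refine IntegrableOn.union ?_ ?_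
  · have hdom : IntegrableOn (fun s : ℝ ↦ x * s ^ (-r)) (Ioc 0 1) :=
      ((intervalIntegrable_iff_integrableOn_Ioc_of_le zero_le_one).mp
        (intervalIntegral.intervalIntegrable_rpow' (show -1 < -r by linarith))).const_mul x
    refine hdom.mono' (hmeas.mono_set Ioc_subset_Ioi_self) ?_
    filter_upwards [ae_restrict_mem measurableSet_Ioc] with s hs
    rw [hnorm s hs.1]
    calc (1 - exp (-(x * s))) * s ^ (-(1 + r)) ≤ x * s * s ^ (-(1 + r)) :=
          mul_le_mul_of_nonneg_right (one_sub_exp_neg_le _) (rpow_nonneg hs.1.le _)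
      _ = x * s ^ (-r) := by
          rw [mul_assoc, ← rpow_one_add' hs.1.le (by linarith)]; ring_nf
  · refine (integrableOn_Ioi_rpow_of_lt (show -(1 + r) < -1 by linarith) one_pos).mono'
      (hmeas.mono_set (Ioi_subset_Ioi zero_le_one)) ?_
    filter_upwards [ae_restrict_mem measurableSet_Ioi] with s (hs : 1 < s)
    rw [hnorm s (zero_lt_one.trans hs)]
    exact mul_le_of_le_one_left (rpow_nonneg (by linarith) _) (by linarith [exp_pos (-(x * s))])

theorem integral_Ioi_comp_mul_left_mul_rpow (f : ℝ → ℝ) (p : ℝ) {x : ℝ} (hx : 0 < x) :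
    ∫ s in Ioi 0, f (x * s) * s ^ p = x ^ (-(p + 1)) * ∫ s in Ioi 0, f s * s ^ p := by
  have h := integral_comp_mul_left_Ioi (fun u ↦ f u * u ^ p) 0 hx
  rw [mul_zero, smul_eq_mul,
    setIntegral_congr_fun measurableSet_Ioi (g := fun s ↦ x ^ p * (f (x * s) * s ^ p))
      (fun s hs ↦ by simp only [mul_rpow hx.le hs.le]; ring),
    integral_const_mul] at h
  rw [neg_add, rpow_add hx, rpow_neg_one, mul_assoc, ← h, ← mul_assoc, ← rpow_add hx,
    neg_add_cancel, rpow_zero, one_mul]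

lemma Gamma_one_sub_eq_neg_mul_Gamma_neg {r : ℝ} (hr : r ≠ 0) :
    Gamma (1 - r) = -r * Gamma (-r) := by
  rw [sub_eq_neg_add]; exact Gamma_add_one (neg_ne_zero.mpr hr)

theorem tendsto_one_sub_exp_neg_mul_rpow_nhdsGT_zero {r : ℝ} (hr1 : r < 1) :
    Tendsto (fun s ↦ (1 - exp (-s)) * s ^ (-r)) (𝓝[>] 0) (𝓝 0) := by
  have hlim : Tendsto (fun s : ℝ ↦ s ^ (1 - r)) (𝓝[>] 0) (𝓝 0) := by
    simpa [zero_rpow (by linarith : 1 - r ≠ 0)] using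
      ((continuousAt_rpow_const 0 (1 - r) (Or.inr (by linarith))).tendsto).mono_left
        nhdsWithin_le_nhds
  refine squeeze_zero' ?_ ?_ hlim
  · filter_upwards [self_mem_nhdsWithin] with s (hs : 0 < s)
    exact mul_nonneg (one_sub_exp_neg_nonneg hs.le) (rpow_nonneg hs.le _)
  · filter_upwards [self_mem_nhdsWithin] with s (hs : 0 < s)
    calc (1 - exp (-s)) * s ^ (-r) ≤ s * s ^ (-r) :=
          mul_le_mul_of_nonneg_right (one_sub_exp_neg_le s) (rpow_nonneg hs.le _)
      _ = s ^ (1 - r) := by rw [← rpow_one_add' hs.le (by linarith)]; ring_nf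

theorem integral_one_sub_exp_neg_mul_rpow_eq_neg_Gamma {r : ℝ} (hr0 : 0 < r) (hr1 : r < 1) :
    ∫ s in Ioi 0, (1 - exp (-s)) * s ^ (-(1 + r)) = -Gamma (-r) := by
  have hu : ∀ s ∈ Ioi (0 : ℝ), HasDerivAt (fun s ↦ 1 - exp (-s)) (exp (-s)) s := fun s _ ↦ by
    simpa using ((hasDerivAt_neg s).exp).const_sub 1
  have hv : ∀ s ∈ Ioi (0 : ℝ), HasDerivAt (fun s ↦ s ^ (-r)) (-r * s ^ (-(1 + r))) s :=
    fun s hs ↦ by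
      simpa [show -r - 1 = -(1 + r) by ring] using hasDerivAt_rpow_const (p := -r) (Or.inl hs.ne')
  have huv' : IntegrableOn (fun s ↦ (1 - exp (-s)) * (-r * s ^ (-(1 + r)))) (Ioi 0) := by
    refine IntegrableOn.congr_fun
      ((integrableOn_one_sub_exp_neg_mul_rpow hr0 hr1 zero_le_one).const_mul (-r))
      (fun s _ ↦ ?_) measurableSet_Ioi
    simp only [one_mul]; ring
  have hu'v : IntegrableOn (fun s ↦ exp (-s) * s ^ (-r)) (Ioi 0) := by
    simpa using GammaIntegral_convergent (s := 1 - r) (by linarith)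
  have h_infty : Tendsto (fun s ↦ (1 - exp (-s)) * s ^ (-r)) atTop (𝓝 0) := by
    simpa using (tendsto_exp_neg_atTop_nhds_zero.const_sub 1).mul (tendsto_rpow_neg_atTop hr0)
  have hparts := integral_Ioi_mul_deriv_eq_deriv_mul hu hv huv' hu'v
    (tendsto_one_sub_exp_neg_mul_rpow_nhdsGT_zero hr1) h_infty
  simp only [mul_left_comm _ (-r), integral_const_mul, sub_self, zero_sub] at hparts
  have hΓ : Gamma (1 - r) = ∫ s in Ioi 0, exp (-s) * s ^ (-r) := by
    rw [Gamma_eq_integral (by linarith), sub_sub_cancel_left]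
  rw [← hΓ, Gamma_one_sub_eq_neg_mul_Gamma_neg hr0.ne', ← mul_neg] at hparts
  exact mul_left_cancel₀ (neg_ne_zero.mpr hr0.ne') hparts

theorem integral_one_sub_exp_neg_mul_rpow {r x : ℝ} (hr0 : 0 < r) (hr1 : r < 1) (hx : 0 ≤ x) :
    ∫ s in Ioi 0, (1 - exp (-(x * s))) * s ^ (-(1 + r)) = x ^ r * -Gamma (-r) := by
  rcases hx.eq_or_lt with rfl | hx
  · simp [zero_rpow hr0.ne']
  · rw [integral_Ioi_comp_mul_left_mul_rpow (fun u ↦ 1 - exp (-u)) _ hx,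
      integral_one_sub_exp_neg_mul_rpow_eq_neg_Gamma hr0 hr1, show -(-(1 + r) + 1) = r by ring]

/-- Integral representation of the Huber-energy power function:
for 0 < r < 1 and a, t ≥ 0,
(a+t)^r − a^r = (1/(−Γ(−r))) ∫₀^∞ (1 − e^{−t s}) e^{−a s} / s^{1+r} ds. -/
theorem huber_power_integral_representation
    (r a t : ℝ) (hr0 : 0 < r) (hr1 : r < 1) (ha : 0 ≤ a) (ht : 0 ≤ t) :
    (a + t) ^ r - a ^ r =
      (1 / (-Real.Gamma (-r))) *
        ∫ s in Set.Ioi (0 : ℝ), (1 - Real.exp (-t * s)) * Real.exp (-a * s) / s ^ (1 + r) := by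
  have hΓ : Gamma (-r) ≠ 0 := fun h ↦ (Gamma_pos_of_pos (sub_pos.mpr hr1)).ne' <| by
    rw [Gamma_one_sub_eq_neg_mul_Gamma_neg hr0.ne', h, mul_zero]
  have hsplit : EqOn (fun s ↦ (1 - exp (-t * s)) * exp (-a * s) / s ^ (1 + r))
      (fun s ↦ (1 - exp (-((a + t) * s))) * s ^ (-(1 + r)) -
        (1 - exp (-(a * s))) * s ^ (-(1 + r))) (Ioi 0) := fun s hs ↦ by
    dsimp only
    rw [rpow_neg hs.le]
    simp only [div_eq_mul_inv, neg_mul, add_mul, neg_add, exp_add]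
    ring
  rw [setIntegral_congr_fun measurableSet_Ioi hsplit,
    integral_sub (integrableOn_one_sub_exp_neg_mul_rpow hr0 hr1 (add_nonneg ha ht))
      (integrableOn_one_sub_exp_neg_mul_rpow hr0 hr1 ha),
    integral_one_sub_exp_neg_mul_rpow hr0 hr1 (add_nonneg ha ht),
    integral_one_sub_exp_neg_mul_rpow hr0 hr1 ha]
  field_simp
  ring
end

section
/- Let d be the distance on probability measures on ℝ induced by the energy kernel h(x,y) = |x−y|, i.e., d(ν,ξ)² = E|X−Y| − (1/2)E|X−X'| − (1/2)E|Y−Y'|. Let μ be an absolutely continuous probability measure on ℝ with strictly increasing CDF F and finite first moment, and fix J ≥ 1 with uniform weights 1/J. Then the unique minimizer X* ∈ ℝ^J of X ↦ d((1/J)Σ_j δ_{X_j}, μ)² (up to reordering of coordinates) satisfies F(X*_{(j)}) = (j − 1/2)/J for each j, where X*_{(1)} ≤ … ≤ X*_{(J)} are the ordered points. -/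
/-!
Once the points are sorted, `∑ᵢ ∑ⱼ |Xᵢ - Xⱼ|` is linear in the coordinates, so the energy splits
into `J` one-dimensional problems: minimise `∫ |x - y| dμ(y) - (2 qⱼ - 1) x` with
`qⱼ = (j + 1/2) / J`. The convex function `x ↦ ∫ |x - y| dμ(y)` has subgradient `2 F(x) - 1`, so
the `j`-th problem is solved exactly where `F(x) = qⱼ`, and only there because `F` is strictly
increasing. Such points exist because `F` is continuous when `μ` has no atoms.
-/

open MeasureTheory ProbabilityTheory Set

theorem Monotone.sum_sum_abs_sub {n : ℕ} {x : Fin n → ℝ} (hx : Monotone x) :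
    ∑ i, ∑ j, |x i - x j| = ∑ i : Fin n, 2 * (2 * (i : ℝ) + 1 - n) * x i := by
  induction n with
  | zero => simp
  | succ n ih =>
    have hlast (i : Fin (n + 1)) : |x i - x (Fin.last n)| = x (Fin.last n) - x i := by
      rw [abs_sub_comm, abs_of_nonneg (sub_nonneg.2 (hx (Fin.le_last i)))]
    have hinit := ih (hx.comp Fin.strictMono_castSucc.monotone)
    have hcoef (i : Fin n) : 2 * (2 * (i : ℝ) + 1 - (n + 1)) * x i.castSucc
        = 2 * (2 * (i : ℝ) + 1 - n) * x i.castSucc - 2 * x i.castSucc := by ring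
    simp only [Function.comp_apply] at hinit
    simp only [Fin.sum_univ_castSucc, hlast, abs_sub_comm (x (Fin.last n)), Finset.sum_add_distrib,
      hinit, Fin.val_castSucc, Fin.val_last, Finset.sum_sub_distrib,
      Finset.sum_const, Finset.card_univ, Fintype.card_fin, nsmul_eq_mul, Nat.cast_add,
      Nat.cast_one, hcoef, ← Finset.mul_sum]
    ring

lemma integrable_abs_sub {μ : Measure ℝ} [IsFiniteMeasure μ]
    (hmom : Integrable (fun x => |x|) μ) (x : ℝ) : Integrable (fun y => |x - y|) μ :=
  ((integrable_const x).sub ((integrable_norm_iff aestronglyMeasurable_id).1 hmom)).abs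

lemma integrable_ite_le_one_neg_one {μ : Measure ℝ} [IsFiniteMeasure μ] (x₀ : ℝ) :
    Integrable (fun y => if y ≤ x₀ then (1 : ℝ) else -1) μ := by
  refine Integrable.of_bound (C := 1) ?_ (Filter.Eventually.of_forall fun y => ?_)
  · exact (Measurable.ite measurableSet_Iic measurable_const measurable_const).aestronglyMeasurable
  · split_ifs <;> simp

/-- `if y ≤ x₀ then 1 else -1` is a subgradient of `|· - y|` at `x₀`; integrated against `μ` it
becomes the subgradient `2 F x₀ - 1` of `x ↦ ∫ |x - y| dμ(y)`. -/
lemma abs_sub_add_sign_mul_le (x₀ x y : ℝ) :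
    |x₀ - y| + (if y ≤ x₀ then 1 else -1) * (x - x₀) ≤ |x - y| := by
  split_ifs with hy
  · rw [abs_of_nonneg (sub_nonneg.2 hy)]; linarith [le_abs_self (x - y)]
  · rw [abs_of_neg (sub_neg.2 (not_le.1 hy))]; linarith [neg_abs_le (x - y)]

lemma abs_sub_add_sign_mul_lt {x₀ x y : ℝ} (hy : y ∈ uIoo x x₀) :
    |x₀ - y| + (if y ≤ x₀ then 1 else -1) * (x - x₀) < |x - y| := by
  obtain ⟨h₁, h₂⟩ := hy
  split_ifs with hy
  · have hxy : x < y := (min_lt_iff.1 h₁).resolve_right hy.not_gt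
    rw [abs_of_nonneg (sub_nonneg.2 hy), abs_of_neg (sub_neg.2 hxy)]
    linarith
  · have hyx : y < x := (lt_max_iff.1 h₂).resolve_right (not_lt.2 (not_le.1 hy).le)
    rw [abs_of_neg (sub_neg.2 (not_le.1 hy)), abs_of_pos (sub_pos.2 hyx)]
    linarith

section
variable {μ : Measure ℝ} [IsProbabilityMeasure μ]

lemma integral_ite_le_one_neg_one (x₀ : ℝ) :
    ∫ y, (if y ≤ x₀ then (1 : ℝ) else -1) ∂μ = 2 * cdf μ x₀ - 1 := by
  have hsign : (fun y => if y ≤ x₀ then (1 : ℝ) else -1)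
      = fun y => 2 * (Iic x₀).indicator 1 y - 1 := by
    ext y
    simp only [indicator_apply, mem_Iic, Pi.one_apply]
    split_ifs <;> norm_num
  have hind : Integrable ((Iic x₀).indicator (1 : ℝ → ℝ)) μ :=
    (integrable_indicator_iff measurableSet_Iic).2 (integrable_const 1).integrableOn
  rw [hsign, integral_sub (hind.const_mul 2) (integrable_const 1), integral_const_mul,
    integral_indicator_one measurableSet_Iic, cdf_eq_real]
  simp

lemma measure_uIoo_ne_zero (hF : StrictMono (cdf μ)) {a b : ℝ} (hab : a ≠ b) :
    μ (uIoo a b) ≠ 0 := by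
  intro h
  obtain ⟨m, ham, hmb⟩ := exists_between (min_lt_max.2 hab)
  have hsub : Iic m ⊆ Iic (a ⊓ b) ∪ uIoo a b := fun y hy =>
    (le_or_gt y (a ⊓ b)).imp id fun h => ⟨h, hy.trans_lt hmb⟩
  have hle : μ (Iic m) ≤ μ (Iic (a ⊓ b)) := by
    simpa [h] using (measure_mono hsub).trans (measure_union_le (μ := μ) _ _)
  have hFm := hF ham
  rw [cdf_eq_real, cdf_eq_real] at hFm
  exact hFm.not_ge (ENNReal.toReal_mono (measure_ne_top _ _) hle)

theorem continuous_cdf [NullSingletonClass μ] : Continuous (cdf μ) := by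
  refine continuous_iff_continuousAt.2 fun x =>
    (cdf μ).mono.continuousAt_iff_leftLim_eq_rightLim.2 ?_
  have hjump := (cdf μ).measure_singleton x
  rw [measure_cdf, measure_singleton, eq_comm, ENNReal.ofReal_eq_zero, sub_nonpos] at hjump
  rw [(cdf μ).rightLim_eq]
  exact le_antisymm ((cdf μ).mono.leftLim_le le_rfl) hjump

lemma exists_cdf_eq [NullSingletonClass μ] {q : ℝ} (hq : q ∈ Ioo 0 1) : ∃ x, cdf μ x = q :=
  mem_range_of_exists_le_of_exists_ge continuous_cdf
    ((tendsto_cdf_atBot μ).eventually_le_const hq.1).exists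
    ((tendsto_cdf_atTop μ).eventually_const_le hq.2).exists

theorem integral_abs_sub_sub_mul_lt (hmom : Integrable (fun x => |x|) μ)
    (hF : StrictMono (cdf μ)) {x₀ x : ℝ} (hx : x ≠ x₀) :
    ∫ y, |x₀ - y| ∂μ - (2 * cdf μ x₀ - 1) * x₀ < ∫ y, |x - y| ∂μ - (2 * cdf μ x₀ - 1) * x := by
  have hsign := (integrable_ite_le_one_neg_one (μ := μ) x₀).mul_const (x - x₀)
  have hlower : Integrable (fun y => |x₀ - y| + (if y ≤ x₀ then 1 else -1) * (x - x₀)) μ :=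
    (integrable_abs_sub hmom x₀).add hsign
  have hgap : ∫ y, |x - y| - (|x₀ - y| + (if y ≤ x₀ then 1 else -1) * (x - x₀)) ∂μ
      = ∫ y, |x - y| ∂μ - (∫ y, |x₀ - y| ∂μ + (2 * cdf μ x₀ - 1) * (x - x₀)) := by
    rw [integral_sub (integrable_abs_sub hmom x) hlower, integral_add (integrable_abs_sub hmom x₀)
      hsign, integral_mul_const, integral_ite_le_one_neg_one]
  have hpos : 0 < ∫ y, |x - y| - (|x₀ - y| + (if y ≤ x₀ then 1 else -1) * (x - x₀)) ∂μ := by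
    refine (integral_pos_iff_support_of_nonneg
      (fun y => sub_nonneg.2 (abs_sub_add_sign_mul_le x₀ x y))
      ((integrable_abs_sub hmom x).sub hlower)).2 ?_
    exact (measure_uIoo_ne_zero hF hx).bot_lt.trans_le
      (measure_mono fun y hy => (sub_pos.2 (abs_sub_add_sign_mul_lt hy)).ne')
  linarith
end

/-- `D` without its constant term `(1/2) ∬ |y - y'| dμ dμ`. -/
noncomputable def quantizationEnergy (μ : Measure ℝ) {J : ℕ} (X : Fin J → ℝ) : ℝ :=
  (1 / J) * ∑ j, ∫ y, |X j - y| ∂μ - (1 / (2 * (J : ℝ) ^ 2)) * ∑ j, ∑ j', |X j - X j'|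

lemma quantizationEnergy_comp_perm (μ : Measure ℝ) {J : ℕ} (X : Fin J → ℝ)
    (σ : Equiv.Perm (Fin J)) : quantizationEnergy μ (X ∘ σ) = quantizationEnergy μ X := by
  have hpairs : ∑ i, ∑ j, |X (σ i) - X (σ j)| = ∑ i, ∑ j, |X i - X j| := by
    rw [Equiv.sum_comp σ (fun i => ∑ j, |X i - X (σ j)|)]
    exact Finset.sum_congr rfl fun i _ => Equiv.sum_comp σ (fun j => |X i - X j|)
  simp only [quantizationEnergy, Function.comp_apply, hpairs,
    Equiv.sum_comp σ (fun j => ∫ y, |X j - y| ∂μ)]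

lemma quantizationEnergy_of_monotone (μ : Measure ℝ) {J : ℕ} {X : Fin J → ℝ} (hX : Monotone X) :
    quantizationEnergy μ X =
      (1 / J) * ∑ j : Fin J, (∫ y, |X j - y| ∂μ - (2 * (((j : ℝ) + 1 / 2) / J) - 1) * X j) := by
  rw [quantizationEnergy, hX.sum_sum_abs_sub, Finset.sum_sub_distrib, mul_sub]
  simp only [Finset.mul_sum]
  congr 1
  refine Finset.sum_congr rfl fun j _ => ?_
  have hJ : (J : ℝ) ≠ 0 := by exact_mod_cast j.pos.ne'
  field_simp

theorem quantizationEnergy_lt_of_sort_ne {μ : Measure ℝ} [IsProbabilityMeasure μ]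
    (hmom : Integrable (fun x => |x|) μ) (hF : StrictMono (cdf μ)) {J : ℕ} {xs : Fin J → ℝ}
    (hxs : ∀ j, cdf μ (xs j) = ((j : ℝ) + 1 / 2) / J) {X : Fin J → ℝ}
    (hX : X ∘ Tuple.sort X ≠ xs) :
    quantizationEnergy μ xs < quantizationEnergy μ X := by
  have hxs_mono : Monotone xs := fun i j hij => by
    rw [← hF.le_iff_le, hxs, hxs]
    gcongr
    exact_mod_cast hij
  obtain ⟨j₀, hj₀⟩ := Function.ne_iff.1 hX
  rw [← quantizationEnergy_comp_perm μ X (Tuple.sort X),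
    quantizationEnergy_of_monotone μ hxs_mono,
    quantizationEnergy_of_monotone μ (Tuple.monotone_sort X)]
  have hJ : (0 : ℝ) < J := by exact_mod_cast j₀.pos
  refine mul_lt_mul_of_pos_left
    (Finset.sum_lt_sum (fun j _ => ?_) ⟨j₀, Finset.mem_univ _, ?_⟩) (one_div_pos.2 hJ)
  · rcases eq_or_ne ((X ∘ Tuple.sort X) j) (xs j) with h | h
    · rw [h]
    · rw [← hxs]; exact (integral_abs_sub_sub_mul_lt hmom hF h).le
  · rw [← hxs]; exact integral_abs_sub_sub_mul_lt hmom hF hj₀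

lemma Fin.add_half_div_mem_Ioo {J : ℕ} (j : Fin J) : ((j : ℝ) + 1 / 2) / J ∈ Ioo 0 1 := by
  have hJ : (0 : ℝ) < J := by exact_mod_cast j.pos
  have hj : (j : ℝ) + 1 ≤ J := by exact_mod_cast j.isLt
  exact ⟨by positivity, (div_lt_one hJ).2 (by linarith)⟩

theorem energy_quantization_quantiles_1D_general
    (μ : Measure ℝ) [IsProbabilityMeasure μ]
    (hac : μ ≪ volume)
    (F : ℝ → ℝ) (hF : ∀ x, F x = (μ (Set.Iic x)).toReal)
    (hFmono : StrictMono F)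
    (hmom : Integrable (fun x => |x|) μ)
    (J : ℕ)
    (D : (Fin J → ℝ) → ℝ)
    (hD : ∀ X, D X =
      (1 / J) * ∑ j, ∫ y, |X j - y| ∂μ
      - (1 / (2 * (J : ℝ) ^ 2)) * ∑ j, ∑ j', |X j - X j'|
      - (1 / 2) * ∫ y, ∫ y', |y - y'| ∂μ ∂μ) :
    (∃ X : Fin J → ℝ, IsMinOn D Set.univ X) ∧
      ∀ X : Fin J → ℝ, IsMinOn D Set.univ X →
        ∃ σ : Equiv.Perm (Fin J), Monotone (fun j => X (σ j)) ∧
          ∀ j : Fin J, F (X (σ j)) = ((j : ℝ) + 1 / 2) / J := by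
  obtain rfl : F = cdf μ := funext fun x => (hF x).trans (cdf_eq_real μ x).symm
  have : NullSingletonClass μ := ⟨fun x => hac Real.volume_singleton⟩
  choose xs hxs using fun j : Fin J => exists_cdf_eq (μ := μ) j.add_half_div_mem_Ioo
  have hD' (X : Fin J → ℝ) :
      D X = quantizationEnergy μ X - (1 / 2) * ∫ y, ∫ y', |y - y'| ∂μ ∂μ := hD X
  have hlt := fun X => quantizationEnergy_lt_of_sort_ne (X := X) hmom hFmono hxs
  have hle (X : Fin J → ℝ) : quantizationEnergy μ xs ≤ quantizationEnergy μ X := by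
    by_cases h : X ∘ Tuple.sort X = xs
    · rw [← h, quantizationEnergy_comp_perm]
    · exact (hlt X h).le
  refine ⟨⟨xs, isMinOn_univ_iff.2 fun X => ?_⟩,
    fun X hX => ⟨Tuple.sort X, Tuple.monotone_sort X, fun j => ?_⟩⟩
  · linarith [hD' xs, hD' X, hle X]
  · have hsorted : X ∘ Tuple.sort X = xs := by
      by_contra h
      linarith [hD' xs, hD' X, isMinOn_univ_iff.1 hX xs, hlt X h]
    rw [← hxs j, ← hsorted]
    rfl

/-- Optimality of quantiles for the 1D energy-kernel quantization: for an
absolutely continuous probability measure μ on ℝ with strictly increasing CDF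
and finite first moment, the minimizers of the energy distance squared
D X = (1/J) Σ_j ∫|X_j−y| dμ − (1/(2J²)) Σ_{j,j'} |X_j−X_{j'}| − (1/2)∬|y−y'|
exist and, up to reordering, satisfy F(X_{(j)}) = (j − 1/2)/J. -/
theorem energy_quantization_quantiles_1D
    (μ : Measure ℝ) [IsProbabilityMeasure μ]
    (hac : μ ≪ volume)
    (F : ℝ → ℝ) (hF : ∀ x, F x = (μ (Set.Iic x)).toReal)
    (hFmono : StrictMono F)
    (hmom : Integrable (fun x => |x|) μ)
    (J : ℕ) (hJ : 1 ≤ J)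
    (D : (Fin J → ℝ) → ℝ)
    (hD : ∀ X, D X =
      (1 / J) * ∑ j, ∫ y, |X j - y| ∂μ
      - (1 / (2 * (J : ℝ) ^ 2)) * ∑ j, ∑ j', |X j - X j'|
      - (1 / 2) * ∫ y, ∫ y', |y - y'| ∂μ ∂μ) :
    (∃ X : Fin J → ℝ, IsMinOn D Set.univ X) ∧
      ∀ X : Fin J → ℝ, IsMinOn D Set.univ X →
        ∃ σ : Equiv.Perm (Fin J), Monotone (fun j => X (σ j)) ∧
          ∀ j : Fin J, F (X (σ j)) = ((j : ℝ) + 1 / 2) / J :=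
  energy_quantization_quantiles_1D_general μ hac F hF hFmono hmom J D hD
end

section
/- For the uniform law μ on [0,1] and the energy kernel h(x,y)=|x−y|, the points x_j = (j−1/2)/J, j = 1,…,J, with uniform weights 1/J, minimize the energy distance d((1/J)Σ_j δ_{x_j}, μ)² over all choices of J points in ℝ. -/
/-!
Write `F x = ∫ y in [0,1], |x - y|`. Once the points are listed in increasing order
`x₍₀₎ ≤ ⋯ ≤ x₍J-1₎`, the pair sum `∑ᵢ ∑ⱼ |xᵢ - xⱼ|` equals `∑ᵢ 2 (2i + 1 - J) x₍ᵢ₎`, so the energy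
splits into the one-variable terms `F x₍ᵢ₎ / J - (2i + 1 - J) x₍ᵢ₎ / J²`. The convex function `F`
has subgradient `2m - 1` at `m ∈ [0,1]`, and `(2i + 1 - J) / J = 2mᵢ - 1` for `mᵢ = (i + 1/2) / J`,
so the `i`-th term is minimized at `mᵢ`. The `mᵢ` are already increasing, so the midpoints
attain every one of these minima simultaneously.
-/

open MeasureTheory Set

lemma integral_abs_sub_add_mul_le {μ : Measure ℝ} [IsFiniteMeasure μ] {m : ℝ}
    (hm : Integrable (fun y => |m - y|) μ) (x : ℝ) :
    ∫ y, |m - y| ∂μ + (μ.real (Iic m) - μ.real (Ioi m)) * (x - m) ≤ ∫ y, |x - y| ∂μ := by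
  have hx : Integrable (fun y => |x - y|) μ :=
    (hm.add (integrable_const |x - m|)).mono' (by fun_prop) <| ae_of_all _ fun y => by
      simpa [add_comm] using abs_sub_le x m y
  have hIic : Integrable (fun y => (Iic m).indicator (1 : ℝ → ℝ) y) μ :=
    (integrable_const 1).indicator measurableSet_Iic
  have hIoi : Integrable (fun y => (Ioi m).indicator (1 : ℝ → ℝ) y) μ :=
    (integrable_const 1).indicator measurableSet_Ioi
  set s : ℝ → ℝ := fun y => (Iic m).indicator 1 y - (Ioi m).indicator 1 y
  have hs : Integrable s μ := hIic.sub hIoi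
  have hs_integral : ∫ y, s y ∂μ = μ.real (Iic m) - μ.real (Ioi m) := by
    rw [integral_sub hIic hIoi, integral_indicator_one measurableSet_Iic,
      integral_indicator_one measurableSet_Ioi]
  -- `s` is a pointwise subgradient of `x ↦ |x - y|` at `m`.
  have hpointwise : ∀ y, |m - y| + s y * (x - m) ≤ |x - y| := by
    intro y
    rcases le_or_gt y m with hy | hy
    · have hsy : s y = 1 := by simp [s, hy, not_lt.mpr hy]
      rw [hsy, abs_of_nonneg (sub_nonneg.mpr hy)]
      linarith [le_abs_self (x - y)]
    · have hsy : s y = -1 := by simp [s, hy, not_le.mpr hy]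
      rw [hsy, abs_of_neg (sub_neg.mpr hy)]
      linarith [neg_abs_le (x - y)]
  calc ∫ y, |m - y| ∂μ + (μ.real (Iic m) - μ.real (Ioi m)) * (x - m)
      = ∫ y, (|m - y| + s y * (x - m)) ∂μ := by
        rw [integral_add hm (hs.mul_const _), integral_mul_const, hs_integral]
    _ ≤ ∫ y, |x - y| ∂μ := integral_mono (hm.add (hs.mul_const _)) hx hpointwise

lemma sum_sum_abs_sub_of_monotone {n : ℕ} {y : Fin n → ℝ} (hy : Monotone y) :
    ∑ i, ∑ j, |y i - y j| = ∑ i : Fin n, 2 * (2 * (i : ℝ) + 1 - n) * y i := by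
  induction n with
  | zero => simp
  | succ n ih =>
    have hlast : ∀ i : Fin n, y i.castSucc ≤ y (Fin.last n) := fun i => hy (Fin.le_last _)
    have hcoeff : ∀ i : Fin n, 2 * (2 * (i.castSucc : ℝ) + 1 - (n + 1 : ℕ)) * y i.castSucc
        = 2 * (2 * (i : ℝ) + 1 - n) * y i.castSucc - 2 * y i.castSucc := fun i => by
      rw [Fin.val_castSucc]; push_cast; ring
    simp only [Fin.sum_univ_castSucc, Finset.sum_add_distrib, hcoeff, Finset.sum_sub_distrib,
      abs_of_nonneg (sub_nonneg.mpr (hlast _)), abs_of_nonpos (sub_nonpos.mpr (hlast _)),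
      ih (y := fun i => y i.castSucc) (hy.comp Fin.strictMono_castSucc.monotone), neg_sub,
      Finset.sum_const, Finset.card_univ, Fintype.card_fin, nsmul_eq_mul, sub_self, abs_zero,
      add_zero, ← Finset.mul_sum, Fin.val_last]
    push_cast
    ring

lemma uniform_real_Iic_sub_real_Ioi {m : ℝ} (hm : m ∈ Icc (0 : ℝ) 1) :
    (volume.restrict (Icc (0 : ℝ) 1)).real (Iic m)
      - (volume.restrict (Icc (0 : ℝ) 1)).real (Ioi m) = 2 * m - 1 := by
  have hIic : Iic m ∩ Icc 0 1 = Icc 0 m := by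
    ext y; simp only [mem_inter_iff, mem_Iic, mem_Icc]; constructor <;> intro h <;> grind
  have hIoi : Ioi m ∩ Icc 0 1 = Ioc m 1 := by
    ext y; simp only [mem_inter_iff, mem_Ioi, mem_Icc, mem_Ioc]; constructor <;> intro h <;> grind
  rw [measureReal_restrict_apply measurableSet_Iic, measureReal_restrict_apply measurableSet_Ioi,
    hIic, hIoi, Real.volume_real_Icc_of_le hm.1, Real.volume_real_Ioc_of_le hm.2]
  ring

lemma integral_abs_sub_uniform_add_mul_le {m : ℝ} (hm : m ∈ Icc (0 : ℝ) 1) (x : ℝ) :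
    (∫ y in Icc (0 : ℝ) 1, |m - y|) + (2 * m - 1) * (x - m) ≤ ∫ y in Icc (0 : ℝ) 1, |x - y| := by
  have := integral_abs_sub_add_mul_le (μ := volume.restrict (Icc (0 : ℝ) 1)) (m := m)
    (continuous_const.sub continuous_id).abs.integrableOn_Icc x
  rwa [uniform_real_Iic_sub_real_Ioi hm] at this

lemma energy_term_at_midpoint_le {J : ℕ} (i : Fin J) (t : ℝ) :
    (1 / J) * (∫ y in Icc (0 : ℝ) 1, |((i : ℝ) + 1 / 2) / J - y|)
        - (1 / (2 * (J : ℝ) ^ 2)) * (2 * (2 * (i : ℝ) + 1 - J) * (((i : ℝ) + 1 / 2) / J))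
      ≤ (1 / J) * (∫ y in Icc (0 : ℝ) 1, |t - y|)
        - (1 / (2 * (J : ℝ) ^ 2)) * (2 * (2 * (i : ℝ) + 1 - J) * t) := by
  have hJ : (0 : ℝ) < J := by exact_mod_cast i.pos
  have hiJ : (i : ℝ) + 1 ≤ J := by exact_mod_cast i.isLt
  set m := ((i : ℝ) + 1 / 2) / J
  have hm : m ∈ Icc (0 : ℝ) 1 := ⟨by positivity, by rw [div_le_one hJ]; linarith⟩
  have hslope : ∀ s, (1 / (2 * (J : ℝ) ^ 2)) * (2 * (2 * (i : ℝ) + 1 - J) * s)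
      = (1 / J) * ((2 * m - 1) * s) := fun s => by
    simp only [m]; field_simp
  rw [hslope, hslope, ← mul_sub, ← mul_sub]
  exact mul_le_mul_of_nonneg_left
    (by linarith [integral_abs_sub_uniform_add_mul_le hm t]) (by positivity)

theorem energy_quantization_uniform_law_general
    (J : ℕ)
    (μ : Measure ℝ) (hμ : μ = volume.restrict (Set.Icc (0 : ℝ) 1))
    (D : (Fin J → ℝ) → ℝ)
    (hD : ∀ X, D X =
      (1 / J) * ∑ j, ∫ y, |X j - y| ∂μ
      - (1 / (2 * (J : ℝ) ^ 2)) * ∑ j, ∑ j', |X j - X j'|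
      - (1 / 2) * ∫ y, ∫ y', |y - y'| ∂μ ∂μ) :
    IsMinOn D Set.univ (fun j : Fin J => ((j : ℝ) + 1 / 2) / J) := by
  subst hμ
  refine isMinOn_univ_iff.mpr fun x => ?_
  set σ := Tuple.sort x
  have hD_perm : D (x ∘ σ) = D x := by
    simp only [hD, Function.comp_apply]
    rw [Equiv.sum_comp σ (fun j => ∫ y in Icc (0 : ℝ) 1, |x j - y|)]
    congr 3
    rw [← Equiv.sum_comp σ (fun i => ∑ j, |x i - x j|)]
    exact Finset.sum_congr rfl fun i _ => Equiv.sum_comp σ (fun j => |x (σ i) - x j|)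
  have hmid : Monotone (fun j : Fin J => ((j : ℝ) + 1 / 2) / J) := fun i j hij => by
    dsimp only
    gcongr
    exact_mod_cast hij
  rw [← hD_perm, hD, hD, sum_sum_abs_sub_of_monotone hmid,
    sum_sum_abs_sub_of_monotone (Tuple.monotone_sort x)]
  gcongr ?_ - _
  simp only [Finset.mul_sum, ← Finset.sum_sub_distrib]
  exact Finset.sum_le_sum fun i _ => energy_term_at_midpoint_le i _

/-- For the uniform law μ on [0,1] and the energy kernel |x−y|, the points
x_j = (j − 1/2)/J with uniform weights minimize the energy distance squared
over all choices of J points in ℝ. -/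
theorem energy_quantization_uniform_law
    (J : ℕ) (hJ : 1 ≤ J)
    (μ : Measure ℝ) (hμ : μ = volume.restrict (Set.Icc (0 : ℝ) 1))
    (D : (Fin J → ℝ) → ℝ)
    (hD : ∀ X, D X =
      (1 / J) * ∑ j, ∫ y, |X j - y| ∂μ
      - (1 / (2 * (J : ℝ) ^ 2)) * ∑ j, ∑ j', |X j - X j'|
      - (1 / 2) * ∫ y, ∫ y', |y - y'| ∂μ ∂μ) :
    IsMinOn D Set.univ (fun j : Fin J => ((j : ℝ) + 1 / 2) / J) :=
  energy_quantization_uniform_law_general J μ hμ D hD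
end

section
/- Let ν = Σ_{q=1}^Q p_q δ_{x_q} be a fixed discrete measure with weights p in the probability simplex, μ a probability measure with finite kernel moments, and Z₁,…,Z_J i.i.d. samples from μ with J ≥ 2. Then the estimator T = d(ν, (1/J)Σ_j δ_{Z_j})² − [Σ_{j≠j'} h(Z_j, Z_{j'})]/(2J²(J−1)) is an unbiased estimator of d(ν, μ)²: E[T] = d(ν,μ)². -/
/-!
Each term h(x_q, Z_j) has mean ∫ h(x_q, ·) dμ. For j ≠ j' independence makes (Z_j, Z_j')
μ ⊗ μ-distributed, so h(Z_j, Z_j') has mean ∬ h dμ dμ, while the diagonal terms vanish because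
h(x, x) = 0. Hence the full double sum has mean J(J - 1) ∬ h, and its total coefficient
1/(2J²) + 1/(2J²(J - 1)) = 1/(2J(J - 1)) turns this into (1/2) ∬ h.
-/

open MeasureTheory ProbabilityTheory Finset

section
variable {Ω E G : Type*} [MeasurableSpace Ω] [MeasurableSpace E] [NormedAddCommGroup G]
  {P : Measure Ω} {μ : Measure E}

lemma integrable_comp_of_map_eq {X : Ω → E} (hX : AEMeasurable X P) (hlaw : P.map X = μ)
    {f : E → G} (hf : Integrable f μ) : Integrable (fun ω => f (X ω)) P :=
  (hlaw ▸ hf).comp_aemeasurable hX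

lemma integral_comp_of_map_eq [NormedSpace ℝ G] {X : Ω → E} (hX : AEMeasurable X P)
    (hlaw : P.map X = μ) {f : E → G} (hf : Integrable f μ) :
    ∫ ω, f (X ω) ∂P = ∫ y, f y ∂μ := by
  rw [← hlaw, integral_map hX (hlaw ▸ hf.aestronglyMeasurable)]

variable {ι : Type*} {Z : ι → Ω → E}

lemma integral_sum_comp_of_map_eq [Fintype ι] (hZ : ∀ i, AEMeasurable (Z i) P)
    (hlaw : ∀ i, P.map (Z i) = μ) {f : E → ℝ} (hf : Integrable f μ) :
    ∫ ω, ∑ i, f (Z i ω) ∂P = Fintype.card ι * ∫ y, f y ∂μ := by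
  rw [integral_finsetSum _ fun i _ => integrable_comp_of_map_eq (hZ i) (hlaw i) hf]
  simp [integral_comp_of_map_eq (hZ _) (hlaw _) hf]

lemma ProbabilityTheory.iIndepFun.map_pair_eq_prod [IsFiniteMeasure P]
    (hZ : ∀ i, AEMeasurable (Z i) P) (hiid : iIndepFun Z P) (hlaw : ∀ i, P.map (Z i) = μ)
    {i j : ι} (hij : i ≠ j) : P.map (fun ω => (Z i ω, Z j ω)) = μ.prod μ := by
  rw [(hiid.indepFun hij).map_prod_eq_prod_map_map (hZ i) (hZ j), hlaw, hlaw]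

lemma integrable_comp_pair_of_iid [IsFiniteMeasure P] (hZ : ∀ i, AEMeasurable (Z i) P)
    (hiid : iIndepFun Z P) (hlaw : ∀ i, P.map (Z i) = μ) {g : E → E → ℝ}
    (hg : Integrable (Function.uncurry g) (μ.prod μ)) (hdiag : ∀ y, g y y = 0) (i j : ι) :
    Integrable (fun ω => g (Z i ω) (Z j ω)) P := by
  rcases eq_or_ne i j with rfl | hij
  · simp [hdiag]
  · exact integrable_comp_of_map_eq ((hZ i).prodMk (hZ j)) (hiid.map_pair_eq_prod hZ hlaw hij) hg

lemma integral_comp_pair_of_iid [IsFiniteMeasure P] [SFinite μ] [DecidableEq ι]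
    (hZ : ∀ i, AEMeasurable (Z i) P) (hiid : iIndepFun Z P) (hlaw : ∀ i, P.map (Z i) = μ)
    {g : E → E → ℝ} (hg : Integrable (Function.uncurry g) (μ.prod μ)) (hdiag : ∀ y, g y y = 0)
    (i j : ι) :
    ∫ ω, g (Z i ω) (Z j ω) ∂P = if i = j then 0 else ∫ y, ∫ y', g y y' ∂μ ∂μ := by
  split_ifs with hij
  · simp [hij, hdiag]
  · exact (integral_comp_of_map_eq ((hZ i).prodMk (hZ j)) (hiid.map_pair_eq_prod hZ hlaw hij)
      hg).trans (integral_prod _ hg)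

lemma integrable_sum_sum_comp_of_iid [IsFiniteMeasure P] [Fintype ι]
    (hZ : ∀ i, AEMeasurable (Z i) P) (hiid : iIndepFun Z P) (hlaw : ∀ i, P.map (Z i) = μ)
    {g : E → E → ℝ} (hg : Integrable (Function.uncurry g) (μ.prod μ)) (hdiag : ∀ y, g y y = 0) :
    Integrable (fun ω => ∑ i, ∑ j, g (Z i ω) (Z j ω)) P :=
  integrable_finsetSum _ fun i _ => integrable_finsetSum _ fun j _ =>
    integrable_comp_pair_of_iid hZ hiid hlaw hg hdiag i j

lemma integral_sum_sum_comp_of_iid [IsFiniteMeasure P] [SFinite μ] [Fintype ι]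
    (hZ : ∀ i, AEMeasurable (Z i) P) (hiid : iIndepFun Z P) (hlaw : ∀ i, P.map (Z i) = μ)
    {g : E → E → ℝ} (hg : Integrable (Function.uncurry g) (μ.prod μ)) (hdiag : ∀ y, g y y = 0) :
    ∫ ω, ∑ i, ∑ j, g (Z i ω) (Z j ω) ∂P
      = Fintype.card ι * (Fintype.card ι - 1) * ∫ y, ∫ y', g y y' ∂μ ∂μ := by
  classical
  have hint := integrable_comp_pair_of_iid hZ hiid hlaw hg hdiag
  rw [integral_finsetSum _ fun i _ => integrable_finsetSum _ fun j _ => hint i j]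
  simp_rw [integral_finsetSum _ fun j _ => hint _ j,
    integral_comp_pair_of_iid hZ hiid hlaw hg hdiag]
  simp only [sum_ite, sum_const_zero, sum_const, nsmul_eq_mul, zero_add,
    filter_ne, card_erase_of_mem (mem_univ _), card_univ]
  rcases isEmpty_or_nonempty ι with hι | hι
  · simp
  · rw [Nat.cast_pred Fintype.card_pos]
    ring

end

theorem one_sample_estimator_unbiased_general
    {E : Type*} [MeasurableSpace E]
    {Ω : Type*} [MeasurableSpace Ω] (P : Measure Ω) [IsProbabilityMeasure P]
    (μ : Measure E) [IsProbabilityMeasure μ]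
    (h : E → E → ℝ)
    (hdiag : ∀ x, h x x = 0)
    (Q J : ℕ) (hJ : 2 ≤ J)
    (p : Fin Q → ℝ)
    (x : Fin Q → E)
    (Z : Fin J → Ω → E)
    (hiid : iIndepFun Z P)
    (hlaw : ∀ j, Measure.map (Z j) P = μ)
    (hint1 : ∀ q, Integrable (fun y => h (x q) y) μ)
    (hint2 : Integrable (Function.uncurry h) (μ.prod μ)) :
    (∫ ω, ((∑ q, ∑ j, p q * (1 / J) * h (x q) (Z j ω))
        - (1 / 2) * ∑ q, ∑ q', p q * p q' * h (x q) (x q')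
        - (1 / (2 * (J : ℝ) ^ 2)) * ∑ j, ∑ j', h (Z j ω) (Z j' ω)
        - (∑ j, ∑ j', if j = j' then 0 else h (Z j ω) (Z j' ω))
            / (2 * (J : ℝ) ^ 2 * (J - 1))) ∂P)
      = (∑ q, p q * ∫ y, h (x q) y ∂μ)
        - (1 / 2) * ∑ q, ∑ q', p q * p q' * h (x q) (x q')
        - (1 / 2) * ∫ y, ∫ y', h y y' ∂μ ∂μ := by
  have hZ : ∀ j, AEMeasurable (Z j) P := fun j =>
    .of_map_ne_zero (hlaw j ▸ IsProbabilityMeasure.ne_zero μ)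
  have hoff : ∀ ω, (∑ j, ∑ j', if j = j' then 0 else h (Z j ω) (Z j' ω))
      = ∑ j, ∑ j', h (Z j ω) (Z j' ω) := fun ω =>
    sum_congr rfl fun j _ => sum_congr rfl fun j' _ => ite_eq_right_iff.mpr fun hjj' => by
      rw [hjj', hdiag]
  have hint_lin : ∀ q, Integrable (fun ω => ∑ j, p q * (1 / J) * h (x q) (Z j ω)) P :=
    fun q => integrable_finsetSum _ fun j _ =>
      (integrable_comp_of_map_eq (hZ j) (hlaw j) (hint1 q)).const_mul _
  have hint_pair := integrable_sum_sum_comp_of_iid hZ hiid hlaw hint2 hdiag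
  have hlin : ∫ ω, ∑ q, ∑ j, p q * (1 / J) * h (x q) (Z j ω) ∂P
      = ∑ q, p q * ∫ y, h (x q) y ∂μ := by
    rw [integral_finsetSum _ fun q _ => hint_lin q]
    refine sum_congr rfl fun q _ => ?_
    rw [integral_sum_comp_of_map_eq hZ hlaw ((hint1 q).const_mul _), integral_const_mul,
      Fintype.card_fin]
    field_simp
  simp_rw [hoff]
  rw [integral_sub (by fun_prop) (by fun_prop), integral_sub (by fun_prop) (by fun_prop),
    integral_sub (by fun_prop) (by fun_prop), integral_div, integral_const, probReal_univ, one_smul,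
    integral_const_mul, hlin, integral_sum_sum_comp_of_iid hZ hiid hlaw hint2 hdiag,
    Fintype.card_fin]
  have hJ1 : (J : ℝ) - 1 ≠ 0 := by
    have : (2 : ℝ) ≤ J := mod_cast hJ
    linarith
  field_simp
  ring

/-- Unbiasedness of the one-sample estimator: for a fixed discrete measure
ν = Σ_q p_q δ_{x_q} (p in the simplex) and i.i.d. samples Z₁,…,Z_J ∼ μ,
the estimator
T = d(ν, (1/J)Σ_j δ_{Z_j})² − (Σ_{j≠j'} h(Z_j,Z_{j'}))/(2J²(J−1))
is an unbiased estimator of d(ν,μ)², where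
d(ν, (1/J)Σ_j δ_{Z_j})² = Σ_q Σ_j p_q (1/J) h(x_q,Z_j)
  − (1/2)Σ_{q,q'} p_q p_{q'} h(x_q,x_{q'}) − (1/(2J²))Σ_{j,j'} h(Z_j,Z_{j'}) and
d(ν,μ)² = Σ_q p_q ∫ h(x_q,y) dμ − (1/2)Σ_{q,q'} p_q p_{q'} h(x_q,x_{q'})
  − (1/2)∬ h dμ dμ. -/
theorem one_sample_estimator_unbiased
    {E : Type*} [MeasurableSpace E]
    {Ω : Type*} [MeasurableSpace Ω] (P : Measure Ω) [IsProbabilityMeasure P]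
    (μ : Measure E) [IsProbabilityMeasure μ]
    (h : E → E → ℝ) (hmeas : Measurable (Function.uncurry h))
    (hsymm : ∀ x y, h x y = h y x) (hdiag : ∀ x, h x x = 0)
    (Q J : ℕ) (hQ : 1 ≤ Q) (hJ : 2 ≤ J)
    (p : Fin Q → ℝ) (hp0 : ∀ q, 0 ≤ p q) (hp1 : ∑ q, p q = 1)
    (x : Fin Q → E)
    (Z : Fin J → Ω → E) (hZmeas : ∀ j, Measurable (Z j))
    (hiid : iIndepFun Z P)
    (hlaw : ∀ j, Measure.map (Z j) P = μ)
    (hint1 : ∀ q, Integrable (fun y => h (x q) y) μ)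
    (hint2 : Integrable (Function.uncurry h) (μ.prod μ)) :
    (∫ ω, ((∑ q, ∑ j, p q * (1 / J) * h (x q) (Z j ω))
        - (1 / 2) * ∑ q, ∑ q', p q * p q' * h (x q) (x q')
        - (1 / (2 * (J : ℝ) ^ 2)) * ∑ j, ∑ j', h (Z j ω) (Z j' ω)
        - (∑ j, ∑ j', if j = j' then 0 else h (Z j ω) (Z j' ω))
            / (2 * (J : ℝ) ^ 2 * (J - 1))) ∂P)
      = (∑ q, p q * ∫ y, h (x q) y ∂μ)
        - (1 / 2) * ∑ q, ∑ q', p q * p q' * h (x q) (x q')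
        - (1 / 2) * ∫ y, ∫ y', h y y' ∂μ ∂μ :=
  one_sample_estimator_unbiased_general P μ h hdiag Q J hJ p x Z hiid hlaw hint1 hint2
end
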